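/- For each m ∈ {0,…,4}, let N(T_m) be the centralizer of T_m in G. Then the quotient group N(T_m)/⟨T_m⟩ of N(T_m) by the cyclic subgroup generated by T_m is isomorphic to the quaternion group of order 8. -/

import Mathlib

open Matrix Complex

noncomputable def T : Fin 5 → Matrix (Fin 4) (Fin 4) ℂ :=
  ![!![1,0,0,0; 0,-1,0,0; 0,0,1,0; 0,0,0,-1],
    !![0,I,0,0; -I,0,0,0; 0,0,0,-I; 0,0,I,0],
    !![0,1,0,0; 1,0,0,0; 0,0,0,1; 0,0,1,0],
    !![0,0,0,1; 0,0,-1,0; 0,-1,0,0; 1,0,0,0],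
    !![0,0,0,I; 0,0,-I,0; 0,I,0,0; -I,0,0,0]]

/-- The subgroup of `GL(4,ℂ)` generated by `T 0, …, T 4`. -/
noncomputable def Ggrp : Subgroup ((Matrix (Fin 4) (Fin 4) ℂ)ˣ) :=
  Subgroup.closure {g | ∃ m : Fin 5, (g : Matrix (Fin 4) (Fin 4) ℂ) = T m}

/-- The underlying matrix of an element of `G`. -/
noncomputable def mat (v : Ggrp) : Matrix (Fin 4) (Fin 4) ℂ :=
  ((v : (Matrix (Fin 4) (Fin 4) ℂ)ˣ) : Matrix (Fin 4) (Fin 4) ℂ)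

/-!
Every `T m` is a monomial matrix with entries in `{±1, ±i}`, so `G` consists of such matrices;
recording a monomial matrix by its column map and its exponents of `i` in `ZMod 4` makes `G`
a finite object on which equalities are decidable. In this form `G` is the list of the 32
matrices `±T_S`, closed under right multiplication by the generators.
For each `m`, two products of two generators, lifting the quaternion units `i` and `j`,
commute with `T m` and induce a map `Q₈ → C(T m) / ⟨T m⟩` that is a homomorphism, injective,
and surjective because every element of the list commuting with `T m` lies in its image:
all finite checks. Since `T m` is a central involution of its centralizer, this identifies the
quotient with `Q₈`.
-/

namespace Subgroup

variable {G : Type*} [Group G]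

theorem mem_zpowers_iff_of_mul_self_eq_one {u x : G} (hu : u * u = 1) :
    x ∈ zpowers u ↔ x = 1 ∨ x = u := by
  refine ⟨?_, by rintro (rfl | rfl) <;> simp [mem_zpowers]⟩
  intro hx
  obtain ⟨k, rfl⟩ := mem_zpowers_iff.1 hx
  rw [zpow_eq_zpow_emod' k (n := 2) (by rw [sq, hu])]
  rcases Int.emod_two_eq k with h | h <;> simp [h]

instance normal_zpowers_subgroupOf_centralizer (u : G) :
    ((zpowers u).subgroupOf (centralizer {u})).Normal := by
  apply normal_subgroupOf_of_le_normalizer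
  rw [← centralizer_closure, ← zpowers_eq_closure]
  exact centralizer_le_normalizer _

theorem mk_eq_mk_iff_of_mul_self_eq_one {u : G} (hu : u * u = 1) {x y : centralizer {u}} :
    (x : centralizer {u} ⧸ (zpowers u).subgroupOf (centralizer {u})) = y ↔
      y = x ∨ y = x * ⟨u, mem_centralizer_singleton_iff.2 rfl⟩ := by
  rw [QuotientGroup.eq, mem_subgroupOf, mem_zpowers_iff_of_mul_self_eq_one hu]
  simp only [Subtype.ext_iff, coe_mul, coe_inv, inv_mul_eq_iff_eq_mul, mul_one]

end Subgroup

theorem QuotientGroup.exists_surjective_ker_eq_of_section {C Q : Type*} [Group C] [Group Q]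
    (K : Subgroup C) [K.Normal] (s : Q → C)
    (hmul : ∀ q r, (s (q * r) : C ⧸ K) = s q * s r)
    (hinj : ∀ q r, (s q : C ⧸ K) = s r → q = r)
    (hsurj : ∀ c : C, ∃ q, (s q : C ⧸ K) = c) :
    ∃ f : C →* Q, Function.Surjective f ∧ f.ker = K := by
  let σ : Q →* C ⧸ K := MonoidHom.mk' (fun q => (s q : C ⧸ K)) hmul
  let e : Q ≃* C ⧸ K :=
    MulEquiv.ofBijective σ ⟨hinj, fun x => QuotientGroup.induction_on x hsurj⟩
  refine ⟨(e.symm : C ⧸ K →* Q).comp (QuotientGroup.mk' K),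
    e.symm.surjective.comp (QuotientGroup.mk'_surjective K), ?_⟩
  rw [MonoidHom.ker_mulEquiv_comp, QuotientGroup.ker_mk']

def quatLift {M : Type*} [Monoid M] (α ξ : M) : QuaternionGroup 2 → M
  | .a k => α ^ k.val
  | .xa k => ξ * α ^ k.val

theorem map_quatLift {M N F : Type*} [Monoid M] [Monoid N] [FunLike F M N]
    [MonoidHomClass F M N] (f : F) (α ξ : M) (q : QuaternionGroup 2) :
    f (quatLift α ξ q) = quatLift (f α) (f ξ) q := by
  cases q <;> simp [quatLift]

theorem I_pow_val_add (x y : ZMod 4) : I ^ (x + y).val = I ^ x.val * I ^ y.val := by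
  rw [ZMod.val_add, ← pow_eq_pow_mod _ I_pow_four, pow_add]

theorem I_pow_val_injective : Function.Injective fun x : ZMod 4 => I ^ x.val := by
  intro x y (h : I ^ x.val = I ^ y.val)
  apply ZMod.val_injective
  have hx := ZMod.val_lt x
  have hy := ZMod.val_lt y
  generalize x.val = a at *
  generalize y.val = b at *
  interval_cases a <;> interval_cases b <;>
    first | rfl | norm_num [pow_succ, Complex.ext_iff] at h

/-- The `ι × ι` matrix whose row `i` has the single nonzero entry `I ^ phase i`, in column
`col i`. Unlike complex matrices, these can be compared by `decide`. -/
@[ext]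
structure Monomial (ι : Type*) where
  col : ι → ι
  phase : ι → ZMod 4

namespace Monomial

variable {ι : Type*}

instance [Fintype ι] [DecidableEq ι] : DecidableEq (Monomial ι) := fun A B =>
  decidable_of_iff (A.col = B.col ∧ A.phase = B.phase) Monomial.ext_iff.symm

instance : Monoid (Monomial ι) where
  mul A B := ⟨B.col ∘ A.col, A.phase + B.phase ∘ A.col⟩
  one := ⟨id, 0⟩
  mul_assoc _ _ _ := Monomial.ext rfl (add_assoc _ _ _)
  one_mul _ := Monomial.ext rfl (zero_add _)
  mul_one _ := Monomial.ext rfl (add_zero _)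

variable [Fintype ι] [DecidableEq ι]

noncomputable def toMatrix : Monomial ι →* Matrix ι ι ℂ where
  toFun A := Matrix.of fun i j => if A.col i = j then I ^ (A.phase i).val else 0
  map_one' := by
    ext i j
    simp [Matrix.one_apply, show (1 : Monomial ι) = ⟨id, 0⟩ from rfl]
  map_mul' A B := by
    ext i j
    rw [Matrix.mul_apply,
      Finset.sum_eq_single (A.col i) (fun k _ hk => by simp [Ne.symm hk]) (by simp)]
    show (if B.col (A.col i) = j then I ^ (A.phase i + B.phase (A.col i)).val else 0) = _
    split_ifs <;> simp [I_pow_val_add, *]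

theorem toMatrix_injective : Function.Injective (toMatrix : Monomial ι → Matrix ι ι ℂ) := by
  intro A B h
  have hentry (i : ι) : toMatrix A i (A.col i) = toMatrix B i (A.col i) := by rw [h]
  have hcol (i : ι) : B.col i = A.col i := by
    by_contra hne
    simpa [toMatrix, hne] using hentry i
  refine Monomial.ext (funext fun i => (hcol i).symm) (funext fun i => I_pow_val_injective ?_)
  simpa [toMatrix, hcol] using hentry i

end Monomial

open Monomial

def monomialT : Fin 5 → Monomial (Fin 4) :=
  ![⟨![0,1,2,3], ![0,2,0,2]⟩,
    ⟨![1,0,3,2], ![1,3,3,1]⟩,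
    ⟨![1,0,3,2], ![0,0,0,0]⟩,
    ⟨![3,2,1,0], ![0,2,2,0]⟩,
    ⟨![3,2,1,0], ![1,3,1,3]⟩]

theorem toMatrix_monomialT (m : Fin 5) : toMatrix (monomialT m) = T m := by
  fin_cases m <;> ext i j <;> fin_cases i <;> fin_cases j <;>
    simp [toMatrix, monomialT, T, ZMod.val_ofNat, ZMod.val_one'', pow_succ]

theorem monomialT_mul_self (m : Fin 5) : monomialT m * monomialT m = 1 := by
  revert m
  decide

theorem T_mul_self (m : Fin 5) : T m * T m = 1 := by
  rw [← toMatrix_monomialT, ← map_mul, monomialT_mul_self, map_one]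

noncomputable def gen (m : Fin 5) : Ggrp :=
  ⟨⟨T m, T m, T_mul_self m, T_mul_self m⟩, Subgroup.subset_closure ⟨m, rfl⟩⟩

noncomputable def genWord (w : List (Fin 5)) : Ggrp := (w.map gen).prod

def wordProd (w : List (Fin 5)) : Monomial (Fin 4) := (w.map monomialT).prod

/-- The 32 matrices `± T_S`, `S ⊆ {0, 1, 2, 3}`, where `-1 = (T 0 * T 1) ^ 2`. -/
def elemsG : List (Monomial (Fin 4)) :=
  (List.sublists [0, 1, 2, 3]).flatMap fun w => [wordProd w, wordProd (0 :: 1 :: 0 :: 1 :: w)]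

theorem mul_monomialT_mem_elemsG : ∀ A ∈ elemsG, ∀ m, A * monomialT m ∈ elemsG := by
  decide

theorem exists_mem_elemsG_of_mem {g : (Matrix (Fin 4) (Fin 4) ℂ)ˣ} (hg : g ∈ Ggrp) :
    ∃ A ∈ elemsG, toMatrix A = g := by
  have step {x y : (Matrix (Fin 4) (Fin 4) ℂ)ˣ} (hx : ∃ A ∈ elemsG, toMatrix A = x)
      (hy : ∃ m, (y : Matrix (Fin 4) (Fin 4) ℂ) = T m) :
      ∃ A ∈ elemsG, toMatrix A = ↑(x * y) := by
    obtain ⟨A, hA, hAx⟩ := hx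
    obtain ⟨m, hy⟩ := hy
    refine ⟨A * monomialT m, mul_monomialT_mem_elemsG A hA m, ?_⟩
    rw [map_mul, hAx, toMatrix_monomialT, Units.val_mul, hy]
  induction hg using Subgroup.closure_induction_right with
  | one => exact ⟨1, by decide, map_one _⟩
  | mul_right x _ y hy ih => exact step ih hy
  | mul_inv_cancel x _ y hy ih =>
    obtain ⟨m, hy⟩ := hy
    exact step ih ⟨m, Units.inv_eq_of_mul_eq_one_right (by rw [hy, T_mul_self])⟩

theorem mat_injective : Function.Injective mat := fun _ _ h => Subtype.ext (Units.ext h)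

noncomputable def toMonomial : Ggrp →* Monomial (Fin 4) where
  toFun g := (exists_mem_elemsG_of_mem g.2).choose
  map_one' := toMatrix_injective <| by
    rw [(exists_mem_elemsG_of_mem (1 : Ggrp).2).choose_spec.2, map_one]
    rfl
  map_mul' g h := toMatrix_injective <| by
    rw [map_mul, (exists_mem_elemsG_of_mem (g * h).2).choose_spec.2,
      (exists_mem_elemsG_of_mem g.2).choose_spec.2, (exists_mem_elemsG_of_mem h.2).choose_spec.2]
    rfl

theorem toMatrix_toMonomial (g : Ggrp) : toMatrix (toMonomial g) = mat g :=
  (exists_mem_elemsG_of_mem g.2).choose_spec.2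

theorem toMonomial_mem_elemsG (g : Ggrp) : toMonomial g ∈ elemsG :=
  (exists_mem_elemsG_of_mem g.2).choose_spec.1

theorem toMonomial_injective : Function.Injective toMonomial := fun g h hgh =>
  mat_injective <| by rw [← toMatrix_toMonomial, hgh, toMatrix_toMonomial]

theorem toMonomial_gen (m : Fin 5) : toMonomial (gen m) = monomialT m :=
  toMatrix_injective <| by rw [toMatrix_toMonomial, toMatrix_monomialT]; rfl

theorem toMonomial_genWord (w : List (Fin 5)) : toMonomial (genWord w) = wordProd w := by
  simp [genWord, wordProd, map_list_prod, Function.comp_def, toMonomial_gen]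

/-- `quatLift α ξ` induces an isomorphism from `Q₈` onto `C(t) / ⟨t⟩`, where `C(t)` is the
centralizer of `t` in `G`. -/
def IsQuaternionLift (t α ξ : Monomial (Fin 4)) : Prop :=
  t * t = 1 ∧ α * t = t * α ∧ ξ * t = t * ξ ∧
  (∀ q r, quatLift α ξ q * quatLift α ξ r = quatLift α ξ (q * r) ∨
    quatLift α ξ q * quatLift α ξ r = quatLift α ξ (q * r) * t) ∧
  (∀ q r, quatLift α ξ r = quatLift α ξ q ∨ quatLift α ξ r = quatLift α ξ q * t →
    q = r) ∧
  ∀ A ∈ elemsG, A * t = t * A → ∃ q, A = quatLift α ξ q ∨ A = quatLift α ξ q * t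

instance (t α ξ : Monomial (Fin 4)) : Decidable (IsQuaternionLift t α ξ) := by
  unfold IsQuaternionLift
  infer_instance

open Subgroup in
theorem exists_surjective_centralizer_ker_eq_zpowers {u α ξ : Ggrp}
    (h : IsQuaternionLift (toMonomial u) (toMonomial α) (toMonomial ξ)) :
    ∃ f : centralizer ({u} : Set Ggrp) →* QuaternionGroup 2,
      Function.Surjective f ∧ f.ker = (zpowers u).subgroupOf (centralizer {u}) := by
  obtain ⟨hu, hα, hξ, hmul, hinj, hcover⟩ := h
  have mem_centralizer {g : Ggrp} (hg : toMonomial g * toMonomial u = toMonomial u * toMonomial g) :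
      g ∈ centralizer {u} :=
    mem_centralizer_singleton_iff.2 (toMonomial_injective (by simpa using hg))
  let ρ : centralizer {u} →* Monomial (Fin 4) := toMonomial.comp (centralizer {u}).subtype
  have hρ : Function.Injective ρ := toMonomial_injective.comp Subtype.val_injective
  let s := quatLift (⟨α, mem_centralizer hα⟩ : centralizer {u}) ⟨ξ, mem_centralizer hξ⟩
  have hs (q : QuaternionGroup 2) : ρ (s q) = quatLift (toMonomial α) (toMonomial ξ) q :=
    map_quatLift ρ _ _ q
  have hmk {x y : centralizer {u}} : (x : centralizer {u} ⧸ (zpowers u).subgroupOf _) = y ↔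
      ρ y = ρ x ∨ ρ y = ρ x * toMonomial u := by
    rw [mk_eq_mk_iff_of_mul_self_eq_one (toMonomial_injective (by simpa using hu)),
      ← hρ.eq_iff, ← hρ.eq_iff, map_mul]
    rfl
  refine QuotientGroup.exists_surjective_ker_eq_of_section _ s (fun q r => ?_)
    (fun q r hqr => hinj q r (by rwa [hmk, hs, hs] at hqr)) (fun c => ?_)
  · rw [← QuotientGroup.mk_mul, hmk, map_mul, hs, hs, hs]
    exact hmul q r
  · have hc : ρ c * toMonomial u = toMonomial u * ρ c := by
      change toMonomial (c : Ggrp) * _ = _ * toMonomial (c : Ggrp)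
      rw [← map_mul, ← map_mul, mem_centralizer_singleton_iff.1 c.2]
    obtain ⟨q, hq⟩ := hcover (ρ c) (toMonomial_mem_elemsG c) hc
    exact ⟨q, hmk.2 (by rwa [hs])⟩

/-- Words in the generators for lifts of the quaternion units `a 1` and `xa 0` to the
centralizer of `T m`. -/
def quatGens : Fin 5 → List (Fin 5) × List (Fin 5) :=
  ![([2, 1], [2, 3]), ([0, 2], [0, 4]), ([1, 0], [3, 0]), ([2, 1], [1, 4]), ([0, 3], [2, 0])]

theorem isQuaternionLift_monomialT :
    ∀ m, IsQuaternionLift (monomialT m) (wordProd (quatGens m).1) (wordProd (quatGens m).2) := by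
  decide

/-- For each reflection `T m` (realized as an element `u` of `G`), the quotient of the
centralizer `N(T m)` of `T m` in `G` by the cyclic subgroup generated by `T m` is
isomorphic to the quaternion group `Q₈` (expressed via a surjective homomorphism onto
`QuaternionGroup 2` whose kernel is `⟨T m⟩`). -/
theorem stmt6 (m : Fin 5) (u : Ggrp) (hu : mat u = T m) :
    ∃ f : (Subgroup.centralizer ({u} : Set Ggrp)) →* QuaternionGroup 2,
      Function.Surjective f ∧
      f.ker = (Subgroup.zpowers u).subgroupOf (Subgroup.centralizer ({u} : Set Ggrp)) := by
  obtain rfl : u = gen m := mat_injective hu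
  apply exists_surjective_centralizer_ker_eq_zpowers
    (α := genWord (quatGens m).1) (ξ := genWord (quatGens m).2)
  rw [toMonomial_gen, toMonomial_genWord, toMonomial_genWord]
  exact isQuaternionLift_monomialT m
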